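/- Consider the parameterized KKT residual map with parameter q₀ ∈ ℝ^k: G(q₀; z, ν, λ) = (P₀z + q₀ + Σ_i ν_i(P_iz + q_i) + Σ_j λ_j(D_jz + h_j); (ν_i·((1/2)zᵀP_iz + q_iᵀz + r_i))_{i}; ((1/2)zᵀD_jz + h_jᵀz + g_j)_{j}). Suppose G(q₀⁰; z*, ν*, λ*) = 0, the KKT differential matrix M at (z*, ν*, λ*) is invertible, φ is a map from a neighborhood U of q₀⁰ to ℝ^k × ℝ^{m_I} × ℝ^{m_E} that is differentiable at q₀⁰, satisfies φ(q₀⁰) = (z*, ν*, λ*), and G(q₀; φ(q₀)) = 0 for all q₀ ∈ U, and ℓ : ℝ^k → ℝ is differentiable at z* with gradient g = ∇ℓ(z*). Then the function q₀ ↦ ℓ(z-component of φ(q₀)) is differentiable at q₀⁰ and its gradient equals d_z, the first block of d = −(Mᵀ)⁻¹·(g, 0, 0). -/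

import Mathlib

/-!
`G` is affine in `q₀`, with `q₀`-derivative the inclusion `u ↦ (u, 0, 0)` of the first block, and
(because the `P_i` and `D_j` are symmetric) its derivative in `(z, ν, λ)` at `(z*, ν*, λ*)` is `M`.
Differentiating `G(q₀; φ(q₀)) = 0` at `q₀⁰` therefore gives `M · Dφ(u) = -(u, 0, 0)`, and the chain
rule gives `D(ℓ ∘ φ_z)(u) = (g, 0, 0) ⬝ Dφ(u) = -((Mᵀ)⁻¹ (g, 0, 0)) ⬝ (u, 0, 0) = d_z ⬝ u`.
-/

open Matrix BigOperators

/-- The KKT differential matrix `M` of the QCQP, evaluated at a primal-dual point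
`(z, ν, λ)`: its first block row is `[Q, P_1z+q_1, …, D_1z+h_1, …]` with
`Q = P₀ + Σ_i ν_i P_i + Σ_j λ_j D_j`, its `i`-th inequality row is
`[ν_i (P_iz+q_i)ᵀ, ((1/2)zᵀP_iz + q_iᵀz + r_i)·e_iᵀ, 0]` and its `j`-th equality row is
`[(D_jz+h_j)ᵀ, 0, 0]`. -/
noncomputable def kktMatrix {k mI mE : ℕ}
    (P0 : Matrix (Fin k) (Fin k) ℝ)
    (P : Fin mI → Matrix (Fin k) (Fin k) ℝ) (q : Fin mI → Fin k → ℝ) (r : Fin mI → ℝ)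
    (D : Fin mE → Matrix (Fin k) (Fin k) ℝ) (h : Fin mE → Fin k → ℝ)
    (z : Fin k → ℝ) (ν : Fin mI → ℝ) (lam : Fin mE → ℝ) :
    Matrix (Fin k ⊕ (Fin mI ⊕ Fin mE)) (Fin k ⊕ (Fin mI ⊕ Fin mE)) ℝ :=
  Matrix.fromBlocks
    (P0 + ∑ i, ν i • P i + ∑ j, lam j • D j)
    (Matrix.of fun a ij =>
      Sum.elim (fun i => ((P i).mulVec z + q i) a) (fun j => ((D j).mulVec z + h j) a) ij)
    (Matrix.of fun ij b =>
      Sum.elim (fun i => ν i * ((P i).mulVec z + q i) b)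
        (fun j => ((D j).mulVec z + h j) b) ij)
    (Matrix.of fun ij ij' =>
      Sum.elim
        (fun i => Sum.elim
          (fun i' => if i' = i then (1 / 2) * (z ⬝ᵥ (P i).mulVec z) + q i ⬝ᵥ z + r i else 0)
          (fun _ => 0) ij')
        (fun _ => 0) ij)

/-- The KKT residual map `G(q₀; z, ν, λ)` of the QCQP, parameterized by the linear
objective coefficient `q₀`. -/
noncomputable def kktResidualQ0 {k mI mE : ℕ}
    (P0 : Matrix (Fin k) (Fin k) ℝ)
    (P : Fin mI → Matrix (Fin k) (Fin k) ℝ) (q : Fin mI → Fin k → ℝ) (r : Fin mI → ℝ)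
    (D : Fin mE → Matrix (Fin k) (Fin k) ℝ) (h : Fin mE → Fin k → ℝ) (gE : Fin mE → ℝ)
    (q0 : Fin k → ℝ)
    (p : (Fin k → ℝ) × (Fin mI → ℝ) × (Fin mE → ℝ)) :
    (Fin k ⊕ (Fin mI ⊕ Fin mE)) → ℝ :=
  Sum.elim
    (P0.mulVec p.1 + q0 + ∑ i, p.2.1 i • ((P i).mulVec p.1 + q i)
      + ∑ j, p.2.2 j • ((D j).mulVec p.1 + h j))
    (Sum.elim
      (fun i => p.2.1 i * ((1 / 2) * (p.1 ⬝ᵥ (P i).mulVec p.1) + q i ⬝ᵥ p.1 + r i))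
      (fun j => (1 / 2) * (p.1 ⬝ᵥ (D j).mulVec p.1) + h j ⬝ᵥ p.1 + gE j))

section ContinuousLinearMaps

variable {𝕜 : Type*} [NontriviallyNormedField 𝕜]

noncomputable def Matrix.mulVecCLM {m n : Type*} [Fintype m] [Fintype n] (A : Matrix m n 𝕜) :
    (n → 𝕜) →L[𝕜] (m → 𝕜) :=
  ⟨A.mulVecLin, continuous_const.matrix_mulVec continuous_id⟩

@[simp]
theorem Matrix.mulVecCLM_apply {m n : Type*} [Fintype m] [Fintype n] (A : Matrix m n 𝕜)
    (v : n → 𝕜) : A.mulVecCLM v = A *ᵥ v :=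
  rfl

noncomputable def dotProductCLM {n : Type*} [Fintype n] (a : n → 𝕜) : (n → 𝕜) →L[𝕜] 𝕜 :=
  ⟨dotProductBilin 𝕜 𝕜 a, continuous_const.dotProduct continuous_id⟩

@[simp]
theorem dotProductCLM_apply {n : Type*} [Fintype n] (a v : n → 𝕜) : dotProductCLM a v = a ⬝ᵥ v :=
  rfl

def sumElimCLM (α β : Type*) : ((α → 𝕜) × (β → 𝕜)) →L[𝕜] (α ⊕ β → 𝕜) :=
  (ContinuousLinearEquiv.sumPiEquivProdPi 𝕜 α β fun _ => 𝕜).symm.toContinuousLinearMap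

@[simp]
theorem sumElimCLM_apply {α β : Type*} (p : (α → 𝕜) × (β → 𝕜)) :
    sumElimCLM α β p = Sum.elim p.1 p.2 :=
  rfl

def sumElim₃CLM (α β γ : Type*) :
    ((α → 𝕜) × (β → 𝕜) × (γ → 𝕜)) →L[𝕜] (α ⊕ (β ⊕ γ) → 𝕜) :=
  sumElimCLM α (β ⊕ γ) ∘L (ContinuousLinearMap.id 𝕜 _).prodMap (sumElimCLM β γ)

@[simp]
theorem sumElim₃CLM_apply {α β γ : Type*} (p : (α → 𝕜) × (β → 𝕜) × (γ → 𝕜)) :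
    sumElim₃CLM α β γ p = Sum.elim p.1 (Sum.elim p.2.1 p.2.2) :=
  rfl

end ContinuousLinearMaps

section Derivatives

variable {𝕜 E F G : Type*} [NontriviallyNormedField 𝕜] [NormedAddCommGroup E] [NormedSpace 𝕜 E]
  [NormedAddCommGroup F] [NormedSpace 𝕜 F] [NormedAddCommGroup G] [NormedSpace 𝕜 G] {x : E}

theorem HasFDerivAt.sumElim {α β : Type*} [Fintype α] [Fintype β] {f : E → α → 𝕜}
    {g : E → β → 𝕜} {f' : E →L[𝕜] α → 𝕜} {g' : E →L[𝕜] β → 𝕜}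
    (hf : HasFDerivAt f f' x) (hg : HasFDerivAt g g' x) :
    HasFDerivAt (fun y => Sum.elim (f y) (g y)) (sumElimCLM α β ∘L f'.prod g') x := by
  exact (sumElimCLM α β).hasFDerivAt.comp x (hf.prodMk hg)

theorem HasFDerivAt.mulVec {m n : Type*} [Fintype m] [Fintype n] (A : Matrix m n 𝕜)
    {f : E → n → 𝕜} {f' : E →L[𝕜] n → 𝕜} (hf : HasFDerivAt f f' x) :
    HasFDerivAt (fun y => A *ᵥ f y) (A.mulVecCLM ∘L f') x :=
  A.mulVecCLM.hasFDerivAt.comp x hf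

theorem HasFDerivAt.const_dotProduct {n : Type*} [Fintype n] (c : n → 𝕜) {f : E → n → 𝕜}
    {f' : E →L[𝕜] n → 𝕜} (hf : HasFDerivAt f f' x) :
    HasFDerivAt (fun y => c ⬝ᵥ f y) (dotProductCLM c ∘L f') x :=
  (dotProductCLM c).hasFDerivAt.comp x hf

theorem HasFDerivAt.dotProduct {α : Type*} [Fintype α] {f g : E → α → 𝕜}
    {f' g' : E →L[𝕜] α → 𝕜} (hf : HasFDerivAt f f' x) (hg : HasFDerivAt g g' x) :
    HasFDerivAt (fun y => f y ⬝ᵥ g y)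
      (dotProductCLM (f x) ∘L g' + dotProductCLM (g x) ∘L f') x := by
  refine (HasFDerivAt.fun_sum (u := Finset.univ) fun b _ =>
    ((ContinuousLinearMap.proj b).hasFDerivAt.comp x hf).mul
      ((ContinuousLinearMap.proj b).hasFDerivAt.comp x hg)).congr_fderiv
    (ContinuousLinearMap.ext fun u => ?_)
  simp only [Function.comp_apply, ContinuousLinearMap.proj_apply, Finset.sum_add_distrib,
    _root_.add_apply, _root_.sum_apply, _root_.smul_apply, ContinuousLinearMap.comp_apply,
    smul_eq_mul, dotProductCLM_apply]
  rfl

theorem HasFDerivAt.comp_eq_neg_of_eventually_add_eq_zero {Φ : F → G} {Φ' : F →L[𝕜] G}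
    {φ : E → F} {φ' : E →L[𝕜] F} {c : E →L[𝕜] G}
    (hΦ : HasFDerivAt Φ Φ' (φ x)) (hφ : HasFDerivAt φ φ' x)
    (h : ∀ᶠ y in nhds x, Φ (φ y) + c y = 0) : Φ' ∘L φ' = -c := by
  have h0 : HasFDerivAt (fun y => Φ (φ y) + c y) (0 : E →L[𝕜] G) x :=
    (hasFDerivAt_const 0 x).congr_of_eventuallyEq h
  exact eq_neg_of_add_eq_zero_left (((hΦ.comp x hφ).add c.hasFDerivAt).unique h0)

end Derivatives

theorem Matrix.dotProduct_sumElim_zero {R m n : Type*} [CommSemiring R] [Fintype m] [Fintype n]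
    (w : m ⊕ n → R) (u : m → R) : w ⬝ᵥ Sum.elim u 0 = (w ∘ Sum.inl) ⬝ᵥ u := by
  conv_lhs => rw [← Sum.elim_comp_inl_inr w]
  rw [sumElim_dotProduct_sumElim, dotProduct_zero, add_zero]

theorem Matrix.IsSymm.dotProduct_mulVec_comm {R n : Type*} [CommSemiring R] [Fintype n]
    {A : Matrix n n R} (hA : A.IsSymm) (x y : n → R) : x ⬝ᵥ A *ᵥ y = A *ᵥ x ⬝ᵥ y := by
  rw [dotProduct_mulVec, ← mulVec_transpose, hA.eq]

theorem Matrix.dotProduct_eq_of_mulVec_eq_neg {R n : Type*} [CommRing R] [Fintype n]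
    [DecidableEq n] {M : Matrix n n R} (hM : IsUnit M) {y b : n → R} (h : M *ᵥ y = -b)
    (a : n → R) : a ⬝ᵥ y = -((Mᵀ)⁻¹ *ᵥ a) ⬝ᵥ b := by
  have hy : y = -(M⁻¹ *ᵥ b) := by
    rw [← neg_neg b, ← h, mulVec_neg, neg_neg, mulVec_mulVec,
      nonsing_inv_mul M ((isUnit_iff_isUnit_det M).mp hM), one_mulVec]
  rw [hy, dotProduct_neg, dotProduct_mulVec, neg_dotProduct, ← transpose_nonsing_inv,
    mulVec_transpose]

section KKT

variable {k mI mE : ℕ} (P0 : Matrix (Fin k) (Fin k) ℝ)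
  (P : Fin mI → Matrix (Fin k) (Fin k) ℝ) (q : Fin mI → Fin k → ℝ) (r : Fin mI → ℝ)
  (D : Fin mE → Matrix (Fin k) (Fin k) ℝ) (h : Fin mE → Fin k → ℝ) (gE : Fin mE → ℝ)

theorem kktMatrix_mulVec (z : Fin k → ℝ) (ν : Fin mI → ℝ) (lam : Fin mE → ℝ)
    (v : Fin k → ℝ) (w : Fin mI → ℝ) (w' : Fin mE → ℝ) :
    kktMatrix P0 P q r D h z ν lam *ᵥ Sum.elim v (Sum.elim w w') =
      Sum.elim
        ((P0 + ∑ i, ν i • P i + ∑ j, lam j • D j) *ᵥ v + ∑ i, w i • (P i *ᵥ z + q i)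
          + ∑ j, w' j • (D j *ᵥ z + h j))
        (Sum.elim
          (fun i => ν i * ((P i *ᵥ z + q i) ⬝ᵥ v)
            + ((1 / 2) * (z ⬝ᵥ P i *ᵥ z) + q i ⬝ᵥ z + r i) * w i)
          (fun j => (D j *ᵥ z + h j) ⬝ᵥ v)) := by
  rw [kktMatrix, fromBlocks_mulVec]
  congr 1
  · ext a
    simp [mulVec, dotProduct, Fintype.sum_sum_type, Finset.sum_add_distrib, add_assoc, mul_add,
      mul_comm]
  · ext (i | j)
    · simp [mulVec, dotProduct, Finset.mul_sum, mul_assoc]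
    · simp [mulVec, dotProduct]

theorem kktResidualQ0_eq_add (q0 : Fin k → ℝ) (p : (Fin k → ℝ) × (Fin mI → ℝ) × (Fin mE → ℝ)) :
    kktResidualQ0 P0 P q r D h gE q0 p = kktResidualQ0 P0 P q r D h gE 0 p + Sum.elim q0 0 := by
  ext (b | i | j) <;> simp [kktResidualQ0, add_right_comm]

theorem hasFDerivAt_kktResidualQ0 (hP : ∀ i, (P i).IsSymm) (hD : ∀ j, (D j).IsSymm)
    (q0 z : Fin k → ℝ) (ν : Fin mI → ℝ) (lam : Fin mE → ℝ) :
    HasFDerivAt (kktResidualQ0 P0 P q r D h gE q0)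
      ((kktMatrix P0 P q r D h z ν lam).mulVecCLM ∘L sumElim₃CLM (Fin k) (Fin mI) (Fin mE))
      (z, ν, lam) := by
  have hz : HasFDerivAt (fun p : (Fin k → ℝ) × (Fin mI → ℝ) × (Fin mE → ℝ) => p.1)
      (ContinuousLinearMap.fst ℝ _ _) (z, ν, lam) := by
    fun_prop
  have hν : ∀ i, HasFDerivAt (fun p : (Fin k → ℝ) × (Fin mI → ℝ) × (Fin mE → ℝ) => p.2.1 i)
      (ContinuousLinearMap.proj i ∘L ContinuousLinearMap.fst ℝ _ _ ∘L
        ContinuousLinearMap.snd ℝ _ _) (z, ν, lam) := by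
    fun_prop
  have hlam : ∀ j, HasFDerivAt (fun p : (Fin k → ℝ) × (Fin mI → ℝ) × (Fin mE → ℝ) => p.2.2 j)
      (ContinuousLinearMap.proj j ∘L ContinuousLinearMap.snd ℝ _ _ ∘L
        ContinuousLinearMap.snd ℝ _ _) (z, ν, lam) := by
    fun_prop
  have hstationarity := (((hz.mulVec P0).add_const q0).add
    (HasFDerivAt.fun_sum (u := Finset.univ) fun i _ =>
      (hν i).fun_smul ((hz.mulVec (P i)).add_const (q i)))).add
    (HasFDerivAt.fun_sum (u := Finset.univ) fun j _ =>
      (hlam j).fun_smul ((hz.mulVec (D j)).add_const (h j)))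
  have hslackness := hasFDerivAt_pi.2 fun i => (hν i).mul
    ((((hz.dotProduct (hz.mulVec (P i))).const_mul (1 / 2)).add
      (hz.const_dotProduct (q i))).add_const (r i))
  have hfeasibility := hasFDerivAt_pi.2 fun j =>
    (((hz.dotProduct (hz.mulVec (D j))).const_mul (1 / 2)).add
      (hz.const_dotProduct (h j))).add_const (gE j)
  refine (hstationarity.sumElim (hslackness.sumElim hfeasibility)).congr_fderiv
    (ContinuousLinearMap.ext fun ⟨v, w, w'⟩ => ?_)
  simp only [one_div, smul_add, Pi.add_apply, ContinuousLinearMap.comp_apply,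
    ContinuousLinearMap.prod_apply, _root_.add_apply, ContinuousLinearMap.coe_fst', mulVecCLM_apply,
    _root_.sum_apply, _root_.smul_apply, ContinuousLinearMap.smulRight_apply,
    ContinuousLinearMap.coe_snd', ContinuousLinearMap.proj_apply, ContinuousLinearMap.coe_pi',
    dotProductCLM_apply, smul_eq_mul, sumElimCLM_apply, sumElim₃CLM_apply, kktMatrix_mulVec,
    add_dotProduct]
  refine congrArg₂ Sum.elim ?_ (congrArg₂ Sum.elim (funext fun i => ?_) (funext fun j => ?_))
  · simp only [add_mulVec, sum_mulVec, smul_mulVec, Finset.sum_add_distrib]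
    abel
  · rw [(hP i).dotProduct_mulVec_comm]
    ring
  · rw [(hD j).dotProduct_mulVec_comm]
    ring

end KKT

theorem qcqp_loss_gradient_q0_general {k mI mE : ℕ}
    (P0 : Matrix (Fin k) (Fin k) ℝ)
    (P : Fin mI → Matrix (Fin k) (Fin k) ℝ) (q : Fin mI → Fin k → ℝ) (r : Fin mI → ℝ)
    (D : Fin mE → Matrix (Fin k) (Fin k) ℝ) (h : Fin mE → Fin k → ℝ) (gE : Fin mE → ℝ)
    (hP : ∀ i, (P i).IsSymm) (hD : ∀ j, (D j).IsSymm)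
    (q00 : Fin k → ℝ) (zs : Fin k → ℝ) (ν : Fin mI → ℝ) (lam : Fin mE → ℝ)
    (hM : IsUnit (kktMatrix P0 P q r D h zs ν lam))
    (U : Set (Fin k → ℝ)) (hU : IsOpen U) (hq00 : q00 ∈ U)
    (φ : (Fin k → ℝ) → ((Fin k → ℝ) × (Fin mI → ℝ) × (Fin mE → ℝ)))
    (hφdiff : DifferentiableAt ℝ φ q00)
    (hφ0 : φ q00 = (zs, ν, lam))
    (hφ : ∀ q0 ∈ U, kktResidualQ0 P0 P q r D h gE q0 (φ q0) = 0)
    (ℓ : (Fin k → ℝ) → ℝ) (ℓ' : (Fin k → ℝ) →L[ℝ] ℝ) (g : Fin k → ℝ)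
    (hℓ : HasFDerivAt ℓ ℓ' zs) (hg : ∀ u, ℓ' u = g ⬝ᵥ u) :
    ∃ L : (Fin k → ℝ) →L[ℝ] ℝ,
      HasFDerivAt (fun q0 => ℓ (φ q0).1) L q00 ∧
        ∀ u : Fin k → ℝ,
          L u = ((-(kktMatrix P0 P q r D h zs ν lam)ᵀ⁻¹.mulVec
            (Sum.elim g (0 : (Fin mI ⊕ Fin mE) → ℝ))) ∘ Sum.inl) ⬝ᵥ u := by
  set M := kktMatrix P0 P q r D h zs ν lam
  have hφ' := hφdiff.hasFDerivAt
  have hG := hasFDerivAt_kktResidualQ0 P0 P q r D h gE hP hD 0 zs ν lam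
  rw [← hφ0] at hG
  have hlin : M.mulVecCLM ∘L sumElim₃CLM _ _ _ ∘L fderiv ℝ φ q00 =
      -(sumElimCLM _ _ ∘L ContinuousLinearMap.inl ℝ _ _) := by
    refine hG.comp_eq_neg_of_eventually_add_eq_zero hφ' ?_
    filter_upwards [hU.mem_nhds hq00] with x hx
    have hx' := hφ x hx
    rwa [kktResidualQ0_eq_add] at hx'
  have hℓ' : HasFDerivAt ℓ ℓ' (φ q00).1 := by rwa [hφ0]
  refine ⟨ℓ' ∘L ContinuousLinearMap.fst ℝ _ _ ∘L fderiv ℝ φ q00, hℓ'.comp q00 hφ'.fst, fun u => ?_⟩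
  have hu : M *ᵥ sumElim₃CLM _ _ _ (fderiv ℝ φ q00 u) = -Sum.elim u 0 := congr($hlin u)
  have hgrad := M.dotProduct_eq_of_mulVec_eq_neg hM hu (Sum.elim g 0)
  simp only [sumElim₃CLM_apply, sumElim_dotProduct_sumElim, zero_dotProduct, add_zero] at hgrad
  rw [ContinuousLinearMap.comp_apply, ContinuousLinearMap.comp_apply, hg,
    ContinuousLinearMap.coe_fst', hgrad, dotProduct_sumElim_zero]

/-- Suppose `G(q₀⁰; z*, ν*, λ*) = 0`, the KKT differential matrix `M` at
`(z*, ν*, λ*)` is invertible, `φ` is an implicit-solution map of `G` on a neighborhood `U`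
of `q₀⁰` that is differentiable at `q₀⁰` with `φ(q₀⁰) = (z*, ν*, λ*)`, and `ℓ` is
differentiable at `z*` with gradient `g`. Then `q₀ ↦ ℓ((φ(q₀))_z)` is differentiable at
`q₀⁰` and its gradient equals `d_z`, the first block of `d = −(Mᵀ)⁻¹·(g, 0, 0)`. -/
theorem qcqp_loss_gradient_q0 {k mI mE : ℕ}
    (P0 : Matrix (Fin k) (Fin k) ℝ)
    (P : Fin mI → Matrix (Fin k) (Fin k) ℝ) (q : Fin mI → Fin k → ℝ) (r : Fin mI → ℝ)
    (D : Fin mE → Matrix (Fin k) (Fin k) ℝ) (h : Fin mE → Fin k → ℝ) (gE : Fin mE → ℝ)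
    (hP0 : P0.IsSymm) (hP : ∀ i, (P i).IsSymm) (hD : ∀ j, (D j).IsSymm)
    (q00 : Fin k → ℝ) (zs : Fin k → ℝ) (ν : Fin mI → ℝ) (lam : Fin mE → ℝ)
    (hroot : kktResidualQ0 P0 P q r D h gE q00 (zs, ν, lam) = 0)
    (hM : IsUnit (kktMatrix P0 P q r D h zs ν lam))
    (U : Set (Fin k → ℝ)) (hU : IsOpen U) (hq00 : q00 ∈ U)
    (φ : (Fin k → ℝ) → ((Fin k → ℝ) × (Fin mI → ℝ) × (Fin mE → ℝ)))
    (hφdiff : DifferentiableAt ℝ φ q00)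
    (hφ0 : φ q00 = (zs, ν, lam))
    (hφ : ∀ q0 ∈ U, kktResidualQ0 P0 P q r D h gE q0 (φ q0) = 0)
    (ℓ : (Fin k → ℝ) → ℝ) (ℓ' : (Fin k → ℝ) →L[ℝ] ℝ) (g : Fin k → ℝ)
    (hℓ : HasFDerivAt ℓ ℓ' zs) (hg : ∀ u, ℓ' u = g ⬝ᵥ u) :
    ∃ L : (Fin k → ℝ) →L[ℝ] ℝ,
      HasFDerivAt (fun q0 => ℓ (φ q0).1) L q00 ∧
        ∀ u : Fin k → ℝ,
          L u = ((-(kktMatrix P0 P q r D h zs ν lam)ᵀ⁻¹.mulVec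
            (Sum.elim g (0 : (Fin mI ⊕ Fin mE) → ℝ))) ∘ Sum.inl) ⬝ᵥ u :=
  qcqp_loss_gradient_q0_general P0 P q r D h gE hP hD q00 zs ν lam hM U hU hq00 φ hφdiff hφ0 hφ ℓ ℓ'
    g hℓ hg
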